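/- arXiv:1803.03530 — 3 statements merged into one kernel-verified Lean document; each statement's English description precedes it below -/
import Mathlib

section
/- There exist a constant ε ∈ (0,1) and an infinite binary string S (over the alphabet {0,1}) that is an infinite weak ε-synchronization string, i.e., for all 1 ≤ i < j < k, ED(S[i,j), S[j,k)) ≥ ⌊(1−ε)(k−i)⌋. -/
/-- The length of a longest common subsequence of two strings (lists). -/
noncomputable def lcsLen {α : Type*} (S T : List α) : ℕ :=
  sSup {n | ∃ U : List α, U.length = n ∧ U.Sublist S ∧ U.Sublist T}

/-- The edit distance (insertions/deletions) between two strings, via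
`ED(S,T) = |S| + |T| - 2·LCS(S,T)`. -/
noncomputable def editDistance {α : Type*} (S T : List α) : ℕ :=
  S.length + T.length - 2 * lcsLen S T

/-- `strSlice S a b` is the substring `S[a, b)` of `S` (1-indexed, `b` excluded). -/
def strSlice {α : Type*} (S : List α) (a b : ℕ) : List α :=
  (S.drop (a - 1)).take (b - a)

/-- `islice f a b` is the substring `f[a, b)` of the infinite string `f`
(1-indexed, `b` excluded). -/
def islice {α : Type*} (f : ℕ → α) (a b : ℕ) : List α :=
  (List.range (b - a)).map fun t => f (a + t)

/-- `S` is an ε-synchronization string: for all `1 ≤ i < j < k ≤ |S| + 1`,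
`ED(S[i,j), S[j,k)) > (1-ε)(k-i)`. -/
def IsSyncString {α : Type*} (ε : ℝ) (S : List α) : Prop :=
  ∀ i j k : ℕ, 1 ≤ i → i < j → j < k → k ≤ S.length + 1 →
    (1 - ε) * ((k : ℝ) - (i : ℝ)) < (editDistance (strSlice S i j) (strSlice S j k) : ℝ)

/-- `S` is an ε-synchronization circle: every cyclic rotation of `S` is an
ε-synchronization string. -/
def IsSyncCircle {α : Type*} (ε : ℝ) (S : List α) : Prop :=
  ∀ i : ℕ, 1 ≤ i → i ≤ S.length → IsSyncString ε (S.rotate (i - 1))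

/-- An infinite ε-synchronization string (1-indexed). -/
def IsInfSyncString {α : Type*} (ε : ℝ) (f : ℕ → α) : Prop :=
  ∀ i j k : ℕ, 1 ≤ i → i < j → j < k →
    (1 - ε) * ((k : ℝ) - (i : ℝ)) < (editDistance (islice f i j) (islice f j k) : ℝ)

/-- `S` is a `c`-long-distance ε-synchronization string: for all
`1 ≤ i < j ≤ i' < j' ≤ |S| + 1` with `l = (j-i)+(j'-i')`, if the two intervals
are adjacent (`i' = j`) or `l > c · log |S|`, then
`ED(S[i,j), S[i',j')) > (1-ε)·l`. -/
noncomputable def IsLongDistSyncString {α : Type*} (c ε : ℝ) (S : List α) : Prop :=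
  ∀ i j i' j' : ℕ, 1 ≤ i → i < j → j ≤ i' → i' < j' → j' ≤ S.length + 1 →
    (i' = j ∨ c * Real.log (S.length : ℝ) < ((j : ℝ) - i) + ((j' : ℝ) - i')) →
    (1 - ε) * (((j : ℝ) - i) + ((j' : ℝ) - i')) <
      (editDistance (strSlice S i j) (strSlice S i' j') : ℝ)

/-- An infinite weak ε-synchronization string: for all `1 ≤ i < j < k`,
`ED(S[i,j), S[j,k)) ≥ ⌊(1-ε)(k-i)⌋`. -/
def IsInfWeakSyncString {α : Type*} (ε : ℝ) (f : ℕ → α) : Prop :=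
  ∀ i j k : ℕ, 1 ≤ i → i < j → j < k →
    ((⌊(1 - ε) * ((k : ℝ) - (i : ℝ))⌋ : ℤ) : ℝ) ≤
      (editDistance (islice f i j) (islice f j k) : ℝ)

/-!
Call a word `R` an approximate square if `R = A ++ B` with `ED(A, B) < |R| / 100`; an infinite
word none of whose factors is an approximate square is a weak `99/100`-synchronization string.
Approximate-square-free binary words exist in every length by Rosenfeld's counting argument:
if `C n` counts them, a free word of length `n` extended by one letter fails only through an
approximate-square suffix of some length `s ≥ 100`, and there are at most `16 (5/3)^s` of those,
so `2 C n - C (n + 1) ≤ ∑ₛ C (n + 1 - s) 16 (5/3)^s`; inductively `C (n + 1) ≥ (15/8) C n`.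
Compactness of `ℕ → Bool` turns free words of every length into an infinite free word.
-/

open Finset

section EditDistance

variable {α : Type*}

theorem exists_sublist_length_eq_lcsLen (S T : List α) :
    ∃ U : List α, U.length = lcsLen S T ∧ U.Sublist S ∧ U.Sublist T := by
  refine Nat.sSup_mem (s := {n | ∃ U : List α, U.length = n ∧ U.Sublist S ∧ U.Sublist T})
    ⟨0, [], rfl, List.nil_sublist _, List.nil_sublist _⟩ ⟨S.length, ?_⟩
  rintro n ⟨U, rfl, hS, -⟩
  exact hS.length_le

theorem exists_common_sublist_of_editDistance_lt {S T : List α} {m L : ℕ}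
    (hlt : editDistance S T < m) (hL : 2 * L + m ≤ S.length + T.length + 1) :
    ∃ U : List α, U.length = L ∧ U.Sublist S ∧ U.Sublist T := by
  obtain ⟨U, hU, hS, hT⟩ := exists_sublist_length_eq_lcsLen S T
  have hUS := hS.length_le
  have hUT := hT.length_le
  unfold editDistance at hlt
  refine ⟨U.take L, ?_, (List.take_sublist _ _).trans hS, (List.take_sublist _ _).trans hT⟩
  rw [List.length_take]
  omega

end EditDistance

theorem Nat.choose_mul_choose_le_add_choose (a b i j : ℕ) :
    a.choose i * b.choose j ≤ (a + b).choose (i + j) := by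
  rw [Nat.add_choose_eq]
  exact single_le_sum (f := fun p : ℕ × ℕ => a.choose p.1 * b.choose p.2)
    (a := (i, j)) (fun _ _ => Nat.zero_le _) (mem_antidiagonal.mpr rfl)

section Words

variable (α : Type*) [Fintype α]

def words (n : ℕ) : Finset (List α) :=
  (univ : Finset (Fin n → α)).map ⟨List.ofFn, List.ofFn_injective⟩

variable {α}

@[simp]
theorem mem_words {n : ℕ} {T : List α} : T ∈ words α n ↔ T.length = n := by
  simp only [words, mem_map, mem_univ, true_and, Function.Embedding.coeFn_mk]
  constructor
  · rintro ⟨f, rfl⟩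
    exact List.length_ofFn
  · rintro rfl
    exact ⟨_, List.ofFn_getElem⟩

theorem card_words (n : ℕ) : #(words α n) = Fintype.card α ^ n := by
  simp [words]

theorem card_filter_words_take_drop {p q n : ℕ} (h : p + q = n) (P Q : List α → Prop)
    [DecidablePred P] [DecidablePred Q] :
    #{T ∈ words α n | P (T.take p) ∧ Q (T.drop p)} =
      #{A ∈ words α p | P A} * #{B ∈ words α q | Q B} := by
  rw [← card_product]
  refine card_nbij' (fun T : List α => (T.take p, T.drop p))
    (fun x : List α × List α => x.1 ++ x.2) ?_ ?_ (fun T _ => List.take_append_drop p T) ?_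
  · intro T hT
    simp only [coe_filter, mem_words, Set.mem_ofPred_eq, coe_product, Set.mem_prod,
      List.length_take, List.length_drop] at hT ⊢
    exact ⟨⟨by omega, hT.2.1⟩, by omega, hT.2.2⟩
  · rintro ⟨A, B⟩ hAB
    simp only [coe_filter, mem_words, Set.mem_ofPred_eq, coe_product, Set.mem_prod] at hAB ⊢
    obtain ⟨⟨rfl, hA⟩, rfl, hB⟩ := hAB
    simp_all
  · rintro ⟨A, B⟩ hAB
    simp only [coe_filter, mem_words, coe_product, Set.mem_prod, Set.mem_ofPred_eq] at hAB
    simp [hAB.1.1]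

theorem card_filter_cons_sublist_le [DecidableEq α] (b : ℕ) (u : α) (U : List α) :
    #{B ∈ words α (b + 1) | (u :: U).Sublist B} ≤
      Fintype.card α * #{B ∈ words α b | (u :: U).Sublist B} +
        #{B ∈ words α b | U.Sublist B} := by
  have hcons : #{B ∈ words α (b + 1) | (u :: U).Sublist B} ≤
      #{B ∈ words α (b + 1) | True ∧ (u :: U).Sublist (B.drop 1)} +
        #{B ∈ words α (b + 1) | B.take 1 = [u] ∧ U.Sublist (B.drop 1)} := by
    refine (card_le_card fun B hB => ?_).trans (card_union_le _ _)
    simp only [mem_filter, mem_words, mem_union] at hB ⊢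
    obtain ⟨hlen, hsub⟩ := hB
    obtain ⟨c, B, rfl⟩ := List.exists_cons_of_length_eq_add_one hlen
    rcases List.sublist_cons_iff.mp hsub with h | ⟨r, hr, h⟩
    · exact Or.inl ⟨hlen, trivial, h⟩
    · obtain ⟨rfl, rfl⟩ := List.cons.inj hr
      exact Or.inr ⟨hlen, rfl, h⟩
  have hfirst := card_filter_words_take_drop (α := α) (show 1 + b = b + 1 by omega)
    (fun _ => True) ((u :: U).Sublist ·)
  have hsecond := card_filter_words_take_drop (α := α) (show 1 + b = b + 1 by omega)
    (· = [u]) (U.Sublist ·)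
  have hone : #{A ∈ words α 1 | A = [u]} ≤ 1 :=
    card_le_one.mpr fun A hA A' hA' => (mem_filter.mp hA).2.trans (mem_filter.mp hA').2.symm
  refine hcons.trans (add_le_add (hfirst.trans_le ?_) (hsecond.trans_le ?_))
  · simp [card_words]
  · exact (Nat.mul_le_mul_right _ hone).trans (one_mul _).le

theorem card_filter_sublist_mul_le [DecidableEq α] (b : ℕ) (U : List α) :
    #{B ∈ words α b | U.Sublist B} * Fintype.card α ^ U.length ≤
      b.choose U.length * Fintype.card α ^ b := by
  induction b generalizing U with
  | zero =>
    cases U with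
    | nil => simp [card_words]
    | cons u U => simp
  | succ b ih =>
    cases U with
    | nil => simp [card_words]
    | cons u U =>
      set q := Fintype.card α
      have h1 := ih (u :: U)
      have h2 := ih U
      simp only [List.length_cons] at h1 ⊢
      calc #{B ∈ words α (b + 1) | (u :: U).Sublist B} * q ^ (U.length + 1)
          ≤ (q * #{B ∈ words α b | (u :: U).Sublist B} + #{B ∈ words α b | U.Sublist B}) *
              q ^ (U.length + 1) := Nat.mul_le_mul_right _ (card_filter_cons_sublist_le b u U)
        _ = q * (#{B ∈ words α b | (u :: U).Sublist B} * q ^ (U.length + 1)) +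
              q * (#{B ∈ words α b | U.Sublist B} * q ^ U.length) := by ring
        _ ≤ q * (b.choose (U.length + 1) * q ^ b) + q * (b.choose U.length * q ^ b) := by
          gcongr
        _ = (b + 1).choose (U.length + 1) * q ^ (b + 1) := by
          rw [Nat.choose_succ_succ]
          ring

theorem card_filter_sublist_take_sublist_drop_mul_le [DecidableEq α] {a s : ℕ} (has : a ≤ s)
    (U : List α) :
    #{R ∈ words α s | U.Sublist (R.take a) ∧ U.Sublist (R.drop a)} *
        Fintype.card α ^ U.length * Fintype.card α ^ U.length ≤
      s.choose (2 * U.length) * Fintype.card α ^ s := by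
  set q := Fintype.card α
  set L := U.length
  have hsum : a + (s - a) = s := Nat.add_sub_cancel' has
  have hchoose := Nat.choose_mul_choose_le_add_choose a (s - a) L L
  rw [hsum, ← two_mul] at hchoose
  calc #{R ∈ words α s | U.Sublist (R.take a) ∧ U.Sublist (R.drop a)} * q ^ L * q ^ L
      = (#{A ∈ words α a | U.Sublist A} * q ^ L) *
          (#{B ∈ words α (s - a) | U.Sublist B} * q ^ L) := by
        rw [card_filter_words_take_drop hsum]
        ring
    _ ≤ (a.choose L * q ^ a) * ((s - a).choose L * q ^ (s - a)) :=
        Nat.mul_le_mul (card_filter_sublist_mul_le a U) (card_filter_sublist_mul_le (s - a) U)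
    _ = a.choose L * (s - a).choose L * q ^ (a + (s - a)) := by rw [pow_add]; ring
    _ ≤ s.choose (2 * L) * q ^ s := by
        rw [hsum]
        gcongr

end Words

theorem Nat.choose_mul_pow_le_one_add_pow {R : Type*} [CommSemiring R] [PartialOrder R]
    [IsOrderedRing R] {x : R} (hx : 0 ≤ x) (s d : ℕ) :
    s.choose d * x ^ d ≤ (1 + x) ^ s := by
  rcases le_or_gt d s with hds | hsd
  · rw [add_comm, add_pow]
    refine le_of_le_of_eq ?_ (sum_congr rfl fun m _ => by rw [one_pow, mul_one, mul_comm])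
    exact single_le_sum (f := fun m => (s.choose m : R) * x ^ m)
      (fun _ _ => by positivity) (mem_range.mpr (Nat.lt_succ_of_le hds))
  · rw [Nat.choose_eq_zero_of_lt hsd, Nat.cast_zero, zero_mul]
    exact pow_nonneg (add_nonneg zero_le_one hx) s

theorem pow_le_pow_of_le_pow_of_mul_le {R : Type*} [Semiring R] [PartialOrder R]
    [IsOrderedRing R] {x y : R} {k d s : ℕ} (hx : 0 ≤ x) (hy : 1 ≤ y) (hxy : x ≤ y ^ k)
    (h : k * d ≤ s) : x ^ d ≤ y ^ s :=
  (pow_le_pow_left₀ hx hxy d).trans (by rw [← pow_mul]; exact pow_le_pow_right₀ hy h)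

section ApproxSquare

variable {α : Type*}

def IsApproxSquare (R : List α) : Prop :=
  ∃ A B, A ++ B = R ∧ editDistance A B < R.length / 100

def ApproxSquareFree (T : List α) : Prop :=
  ∀ R, R <:+: T → ¬ IsApproxSquare R

theorem ApproxSquareFree.nil : ApproxSquareFree ([] : List α) := by
  rintro R hR ⟨A, B, -, hlt⟩
  rw [List.eq_nil_of_infix_nil hR] at hlt
  simp at hlt

theorem ApproxSquareFree.infix {S T : List α} (hT : ApproxSquareFree T) (h : S <:+: T) :
    ApproxSquareFree S :=
  fun R hR => hT R (hR.trans h)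

theorem IsApproxSquare.hundred_le_length {R : List α} (h : IsApproxSquare R) :
    100 ≤ R.length := by
  obtain ⟨A, B, -, hlt⟩ := h
  by_contra! hR
  rw [Nat.div_eq_of_lt hR] at hlt
  exact Nat.not_lt_zero _ hlt

theorem exists_suffix_isApproxSquare {T : List α} {n : ℕ} (hlen : T.length = n + 1)
    (hfree : ApproxSquareFree (T.take n)) (hT : ¬ ApproxSquareFree T) :
    ∃ R, R <:+ T ∧ IsApproxSquare R := by
  simp only [ApproxSquareFree, not_forall, not_not] at hT
  obtain ⟨R, hRT, hR⟩ := hT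
  obtain ⟨x, hx⟩ := List.length_eq_one_iff.mp (show (T.drop n).length = 1 by simp [hlen])
  rw [← List.take_append_drop n T, hx, List.infix_concat_iff] at hRT
  rcases hRT with hsuffix | hinfix
  · rw [← hx, List.take_append_drop] at hsuffix
    exact ⟨R, hsuffix, hR⟩
  · exact absurd hR (hfree R hinfix)

/-- `ED(A, B) < s / 100` with `|A| + |B| = s` forces `LCS(A, B) ≥ overlapLength s`. -/
def overlapLength (s : ℕ) : ℕ := (s - s / 100 + 1) / 2

theorem IsApproxSquare.exists_common_sublist {R : List α} (h : IsApproxSquare R) :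
    ∃ a ≤ R.length, ∃ U : List α, U.length = overlapLength R.length ∧
      U.Sublist (R.take a) ∧ U.Sublist (R.drop a) := by
  obtain ⟨A, B, rfl, hlt⟩ := h
  refine ⟨A.length, by simp, ?_⟩
  rw [List.take_left, List.drop_left]
  refine exists_common_sublist_of_editDistance_lt hlt ?_
  simp only [overlapLength, List.length_append]
  omega

end ApproxSquare

section Counting

variable {α : Type*} [Fintype α] [DecidableEq α] [Nonempty α]

open scoped Classical in
theorem card_isApproxSquare_mul_le (s : ℕ) :
    #{R ∈ words α s | IsApproxSquare R} * Fintype.card α ^ overlapLength s ≤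
      (s + 1) * s.choose (2 * overlapLength s) * Fintype.card α ^ s := by
  set q := Fintype.card α
  set L := overlapLength s
  set count := fun (a : ℕ) (U : List α) =>
    #{R ∈ words α s | U.Sublist (R.take a) ∧ U.Sublist (R.drop a)}
  have hcover : {R ∈ words α s | IsApproxSquare R} ⊆
      (range (s + 1)).biUnion fun a => (words α L).biUnion fun U =>
        {R ∈ words α s | U.Sublist (R.take a) ∧ U.Sublist (R.drop a)} := by
    intro R hR
    obtain ⟨hlen, hsq⟩ := mem_filter.mp hR
    obtain ⟨a, ha, U, hU, hA, hB⟩ := hsq.exists_common_sublist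
    rw [mem_words] at hlen
    simp only [mem_biUnion, mem_range, mem_filter, mem_words]
    exact ⟨a, by omega, U, by rw [hU, hlen], hlen, hA, hB⟩
  have hterm : ∀ a ∈ range (s + 1), ∀ U ∈ words α L,
      count a U * q ^ L * q ^ L ≤ s.choose (2 * L) * q ^ s := by
    intro a ha U hU
    rw [← mem_words.mp hU]
    exact card_filter_sublist_take_sublist_drop_mul_le (Nat.lt_succ_iff.mp (mem_range.mp ha)) U
  refine Nat.le_of_mul_le_mul_right ?_ (pow_pos (Fintype.card_pos (α := α)) L)
  calc #{R ∈ words α s | IsApproxSquare R} * q ^ L * q ^ L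
      ≤ (∑ a ∈ range (s + 1), ∑ U ∈ words α L, count a U) * q ^ L * q ^ L := by
        gcongr
        exact (card_le_card hcover).trans
          (card_biUnion_le.trans (sum_le_sum fun a _ => card_biUnion_le))
    _ = ∑ a ∈ range (s + 1), ∑ U ∈ words α L, count a U * q ^ L * q ^ L := by
        simp only [sum_mul]
    _ ≤ ∑ a ∈ range (s + 1), ∑ U ∈ words α L, s.choose (2 * L) * q ^ s :=
        sum_le_sum fun a ha => sum_le_sum fun U hU => hterm a ha U hU
    _ = (s + 1) * s.choose (2 * L) * q ^ s * q ^ L := by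
        simp only [sum_const, card_range, card_words, smul_eq_mul]
        ring

end Counting

/-- The binomial theorem at `x = 1/16` bounds both `s + 1` and `C(s, d)`; with `2 ≤ (17/12)^2`
and `32 ≤ (26/25)^100` everything is absorbed since `(17/16)^2 · (17/12) · (26/25) < 5/3`. -/
theorem succ_mul_choose_mul_two_pow_le {s L d : ℕ} (hs : 2 * L + d = s) (hd : 100 * d ≤ s) :
    ((s + 1) * s.choose d * 2 ^ (L + d) : ℝ) ≤ 16 * (5 / 3) ^ s := by
  have hsucc : (s + 1 : ℝ) ≤ 16 * (17 / 16) ^ s := by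
    have := one_add_mul_le_pow (show (-2 : ℝ) ≤ 1 / 16 by norm_num) s
    norm_num at this
    linarith
  have hchoose : (s.choose d : ℝ) ≤ 16 ^ d * (17 / 16) ^ s := by
    have := Nat.choose_mul_pow_le_one_add_pow (show (0 : ℝ) ≤ 1 / 16 by norm_num) s d
    rw [← le_div_iff₀ (by positivity)] at this
    refine this.trans_eq ?_
    rw [one_div_pow, div_div_eq_mul_div, div_one]
    norm_num
    ring
  have hL : (2 : ℝ) ^ L ≤ (17 / 12) ^ s :=
    pow_le_pow_of_le_pow_of_mul_le (k := 2) (by norm_num) (by norm_num) (by norm_num) (by omega)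
  have hd32 : (32 : ℝ) ^ d ≤ (26 / 25) ^ s :=
    pow_le_pow_of_le_pow_of_mul_le (k := 100) (by norm_num) (by norm_num) (by norm_num) hd
  calc ((s + 1) * s.choose d * 2 ^ (L + d) : ℝ)
      ≤ (16 * (17 / 16) ^ s) * (16 ^ d * (17 / 16) ^ s) * 2 ^ (L + d) := by gcongr
    _ = 16 * ((17 / 16) ^ s * (17 / 16) ^ s) * 2 ^ L * 32 ^ d := by
        rw [pow_add, show (32 : ℝ) = 16 * 2 by norm_num, mul_pow]
        ring
    _ ≤ 16 * ((17 / 16) ^ s * (17 / 16) ^ s) * (17 / 12) ^ s * (26 / 25) ^ s := by gcongr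
    _ = 16 * (17 / 16 * (17 / 16) * (17 / 12) * (26 / 25)) ^ s := by
        simp only [mul_pow]
        ring
    _ ≤ 16 * (5 / 3) ^ s := by gcongr; norm_num

open scoped Classical in
theorem card_isApproxSquare_bool_le (s : ℕ) :
    (#{R ∈ words Bool s | IsApproxSquare R} : ℝ) ≤ 16 * (5 / 3) ^ s := by
  rcases lt_or_ge s 100 with hs100 | hs100
  · rw [filter_false_of_mem fun R hR hsq => by
      have := hsq.hundred_le_length
      rw [mem_words.mp hR] at this
      omega]
    simp only [card_empty, Nat.cast_zero]
    positivity
  set L := overlapLength s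
  obtain ⟨d, hs, hd⟩ : ∃ d, 2 * L + d = s ∧ 100 * d ≤ s :=
    ⟨s - 2 * L, by simp only [L, overlapLength]; omega, by simp only [L, overlapLength]; omega⟩
  have hcount := card_isApproxSquare_mul_le (α := Bool) s
  rw [Fintype.card_bool, Nat.choose_symm_of_eq_add hs.symm,
    show 2 ^ s = 2 ^ (L + d) * 2 ^ L by rw [← pow_add, ← hs]; ring_nf, ← mul_assoc] at hcount
  have hW := Nat.le_of_mul_le_mul_right hcount (by positivity)
  exact (Nat.cast_le.mpr hW).trans (by exact_mod_cast succ_mul_choose_mul_two_pow_le hs hd)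

section FreeCount

open scoped Classical

noncomputable def freeCount (n : ℕ) : ℕ :=
  #{T ∈ words Bool n | ApproxSquareFree T}

theorem two_mul_freeCount_le (n : ℕ) :
    2 * freeCount n ≤ freeCount (n + 1) +
      #{T ∈ words Bool (n + 1) | ApproxSquareFree (T.take n) ∧ ¬ ApproxSquareFree T} := by
  have hext := card_filter_words_take_drop (α := Bool) (rfl : n + 1 = n + 1)
    ApproxSquareFree (fun _ => True)
  rw [filter_true_of_mem fun _ _ => trivial, card_words, Fintype.card_bool, pow_one] at hext
  calc 2 * freeCount n
      = #{T ∈ words Bool (n + 1) | ApproxSquareFree (T.take n) ∧ True} := by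
        rw [hext, freeCount, mul_comm]
    _ ≤ #({T ∈ words Bool (n + 1) | ApproxSquareFree T} ∪
          {T ∈ words Bool (n + 1) | ApproxSquareFree (T.take n) ∧ ¬ ApproxSquareFree T}) := by
        refine card_le_card fun T hT => ?_
        simp only [mem_filter, mem_union, and_true] at hT ⊢
        tauto
    _ ≤ _ := card_union_le _ _

theorem card_filter_not_approxSquareFree_le (n : ℕ) :
    #{T ∈ words Bool (n + 1) | ApproxSquareFree (T.take n) ∧ ¬ ApproxSquareFree T} ≤
      ∑ s ∈ Ico 100 (n + 2),
        freeCount (n + 1 - s) * #{R ∈ words Bool s | IsApproxSquare R} := by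
  refine (card_le_card (t := (Ico 100 (n + 2)).biUnion fun s =>
    {T ∈ words Bool (n + 1) | ApproxSquareFree (T.take (n + 1 - s)) ∧
      IsApproxSquare (T.drop (n + 1 - s))}) fun T hT => ?_).trans
    (card_biUnion_le.trans (sum_le_sum fun s hs => ?_))
  · obtain ⟨hlen, hfree, hnot⟩ := mem_filter.mp hT
    rw [mem_words] at hlen
    obtain ⟨R, hRT, hR⟩ := exists_suffix_isApproxSquare hlen hfree hnot
    have hs100 := hR.hundred_le_length
    have hsn := hRT.length_le
    have hdrop := List.suffix_iff_eq_drop.mp hRT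
    rw [hlen] at hsn hdrop
    simp only [mem_biUnion, mem_Ico, mem_filter, mem_words]
    refine ⟨R.length, ⟨hs100, by omega⟩, hlen, ?_, hdrop ▸ hR⟩
    refine hfree.infix ?_
    rw [show n + 1 - R.length = min (n + 1 - R.length) n by omega, ← List.take_take]
    exact (List.take_prefix _ _).isInfix
  · have hsn : n + 1 - s + s = n + 1 := Nat.sub_add_cancel (Nat.lt_succ_iff.mp (mem_Ico.mp hs).2)
    exact (card_filter_words_take_drop hsn _ _).le

theorem freeCount_mul_card_isApproxSquare_le {n s : ℕ} (hs : s ∈ Ico 100 (n + 2))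
    (h : ∀ p ≤ n, (15 / 8 : ℝ) ^ (n - p) * freeCount p ≤ freeCount n) :
    ((freeCount (n + 1 - s) * #{R ∈ words Bool s | IsApproxSquare R} : ℕ) : ℝ) ≤
      30 * freeCount n * (8 / 9) ^ s := by
  obtain ⟨hs100, hsn⟩ := mem_Ico.mp hs
  have hpow : (5 / 3 : ℝ) ^ s = (15 / 8) ^ (n - (n + 1 - s)) * (15 / 8) * (8 / 9) ^ s := by
    rw [← pow_succ, show n - (n + 1 - s) + 1 = s by omega, ← mul_pow]
    norm_num
  push_cast
  calc (freeCount (n + 1 - s) : ℝ) * #{R ∈ words Bool s | IsApproxSquare R}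
      ≤ freeCount (n + 1 - s) * (16 * (5 / 3) ^ s) := by
        gcongr
        exact card_isApproxSquare_bool_le s
    _ = 30 * ((15 / 8) ^ (n - (n + 1 - s)) * freeCount (n + 1 - s)) * (8 / 9) ^ s := by
        rw [hpow]
        ring
    _ ≤ 30 * freeCount n * (8 / 9) ^ s := by
        gcongr
        exact h _ (by omega)

theorem mul_freeCount_le_freeCount_succ {n : ℕ}
    (h : ∀ p ≤ n, (15 / 8 : ℝ) ^ (n - p) * freeCount p ≤ freeCount n) :
    (15 / 8 : ℝ) * freeCount n ≤ freeCount (n + 1) := by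
  have hnew : (#{T ∈ words Bool (n + 1) |
      ApproxSquareFree (T.take n) ∧ ¬ ApproxSquareFree T} : ℝ) ≤ freeCount n / 8 :=
    calc _ ≤ ∑ s ∈ Ico 100 (n + 2),
          ((freeCount (n + 1 - s) * #{R ∈ words Bool s | IsApproxSquare R} : ℕ) : ℝ) := by
          exact_mod_cast card_filter_not_approxSquareFree_le n
      _ ≤ ∑ s ∈ Ico 100 (n + 2), 30 * freeCount n * (8 / 9 : ℝ) ^ s :=
          sum_le_sum fun s hs => freeCount_mul_card_isApproxSquare_le hs h
      _ ≤ 30 * freeCount n * ((8 / 9 : ℝ) ^ 100 / (1 - 8 / 9)) := by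
          rw [← mul_sum]
          gcongr
          exact geom_sum_Ico_le_of_lt_one (by norm_num) (by norm_num)
      _ = freeCount n * (30 * ((8 / 9 : ℝ) ^ 100 / (1 - 8 / 9))) := by ring
      _ ≤ freeCount n * (1 / 8) := by gcongr; norm_num
      _ = freeCount n / 8 := by ring
  have htwo : (2 * freeCount n : ℝ) ≤ freeCount (n + 1) + #{T ∈ words Bool (n + 1) |
      ApproxSquareFree (T.take n) ∧ ¬ ApproxSquareFree T} := by
    exact_mod_cast two_mul_freeCount_le n
  linarith

theorem pow_mul_freeCount_le (n : ℕ) :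
    ∀ p ≤ n, (15 / 8 : ℝ) ^ (n - p) * freeCount p ≤ freeCount n := by
  induction n with
  | zero =>
    intro p hp
    rw [Nat.le_zero.mp hp, pow_zero, one_mul]
  | succ n ih =>
    intro p hp
    rcases hp.lt_or_eq with hp | rfl
    · calc (15 / 8 : ℝ) ^ (n + 1 - p) * freeCount p
          = 15 / 8 * ((15 / 8) ^ (n - p) * freeCount p) := by
            rw [show n + 1 - p = n - p + 1 by omega, pow_succ]
            ring
        _ ≤ 15 / 8 * freeCount n := by gcongr; exact ih p (by omega)
        _ ≤ freeCount (n + 1) := mul_freeCount_le_freeCount_succ ih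
    · rw [Nat.sub_self, pow_zero, one_mul]

theorem exists_length_eq_approxSquareFree (n : ℕ) :
    ∃ T : List Bool, T.length = n ∧ ApproxSquareFree T := by
  have hzero : 1 ≤ freeCount 0 :=
    card_pos.mpr ⟨[], mem_filter.mpr ⟨mem_words.mpr rfl, ApproxSquareFree.nil⟩⟩
  have hpos : (0 : ℝ) < freeCount n := by
    calc (0 : ℝ) < (15 / 8) ^ (n - 0) * freeCount 0 := by
          have : (1 : ℝ) ≤ freeCount 0 := by exact_mod_cast hzero
          positivity
      _ ≤ freeCount n := pow_mul_freeCount_le n 0 (Nat.zero_le n)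
  obtain ⟨T, hT⟩ := card_pos.mp (Nat.cast_pos.mp hpos)
  exact ⟨T, mem_words.mp (mem_filter.mp hT).1, (mem_filter.mp hT).2⟩

end FreeCount

/-- König's lemma, via compactness of `ℕ → α`. -/
theorem exists_forall_map_range_of_prefix_closed {α : Type*} [Finite α] {P : List α → Prop}
    (hP : ∀ {S T : List α}, S <+: T → P T → P S)
    (hex : ∀ n, ∃ T : List α, T.length = n ∧ P T) :
    ∃ f : ℕ → α, ∀ n, P ((List.range n).map f) := by
  let _ : TopologicalSpace α := ⊥
  have _ : DiscreteTopology α := ⟨rfl⟩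
  obtain ⟨x₀⟩ : Nonempty α := by
    obtain ⟨T, hT, -⟩ := hex 1
    exact ⟨T.head (List.ne_nil_of_length_eq_add_one hT)⟩
  have hofFn (n : ℕ) (f : ℕ → α) :
      (List.range n).map f = List.ofFn fun i : Fin n => f i := by
    apply List.ext_getElem <;> simp
  set t : ℕ → Set (ℕ → α) := fun n => {f | P ((List.range n).map f)}
  have hmono : ∀ n, t (n + 1) ⊆ t n := fun n f hf =>
    hP (by rw [List.range_succ, List.map_append]; exact List.prefix_append _ _) hf
  have hne : ∀ n, (t n).Nonempty := by
    intro n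
    obtain ⟨T, hT, hPT⟩ := hex n
    refine ⟨fun k => T.getD k x₀, ?_⟩
    show P ((List.range n).map fun k => T.getD k x₀)
    convert hPT
    apply List.ext_getElem <;> simp +contextual [hT]
  have hclosed : ∀ n, IsClosed (t n) := by
    intro n
    have : t n = (fun f (i : Fin n) => f i) ⁻¹' {g | P (List.ofFn g)} := by
      ext f
      simp [t, hofFn]
    rw [this]
    exact (isClosed_discrete _).preimage (continuous_pi fun i => continuous_apply _)
  obtain ⟨f, hf⟩ := IsCompact.nonempty_iInter_of_sequence_nonempty_isCompact_isClosed t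
    hmono hne (hclosed 0).isCompact hclosed
  exact ⟨f, Set.mem_iInter.mp hf⟩

theorem islice_append {α : Type*} (f : ℕ → α) {i j k : ℕ} (hij : i ≤ j) (hjk : j ≤ k) :
    islice f i j ++ islice f j k = islice f i k := by
  obtain ⟨a, rfl⟩ := Nat.exists_eq_add_of_le hij
  obtain ⟨b, rfl⟩ := Nat.exists_eq_add_of_le hjk
  unfold islice
  rw [Nat.add_sub_cancel_left, Nat.add_sub_cancel_left, show i + a + b - i = a + b by omega,
    List.range_add, List.map_append, List.map_map]
  congr 2
  funext t
  simp [add_assoc]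

theorem isInfWeakSyncString_of_forall_approxSquareFree {α : Type*} {f : ℕ → α}
    (hf : ∀ n, ApproxSquareFree ((List.range n).map f)) :
    IsInfWeakSyncString (99 / 100) f := by
  intro i j k _ hij hjk
  have hinfix : islice f i k <:+: (List.range k).map f := by
    rw [show (List.range k).map f = islice f 0 k by simp [islice],
      ← islice_append f (Nat.zero_le i) (by omega)]
    exact (List.suffix_append _ _).isInfix
  have hED : (k - i) / 100 ≤ editDistance (islice f i j) (islice f j k) := by
    by_contra! hlt
    refine hf k _ hinfix ⟨_, _, islice_append f hij.le hjk.le, ?_⟩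
    simpa [islice] using hlt
  have hfloor : ⌊(1 - 99 / 100 : ℝ) * ((k : ℝ) - i)⌋ = ((k - i) / 100 : ℕ) := by
    rw [show (1 - 99 / 100 : ℝ) * ((k : ℝ) - i) = ((k - i : ℕ) : ℝ) / (100 : ℕ) by
      push_cast [show i ≤ k by omega]; ring, Int.floor_div_natCast, Int.floor_natCast]
    norm_cast
  rw [hfloor]
  exact_mod_cast hED

/-- There exist `ε ∈ (0,1)` and an infinite binary string that is
an infinite weak ε-synchronization string. -/
theorem exists_infinite_binary_weak_sync_string :
    ∃ ε : ℝ, 0 < ε ∧ ε < 1 ∧ ∃ f : ℕ → Bool, IsInfWeakSyncString ε f := by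
  obtain ⟨f, hf⟩ := exists_forall_map_range_of_prefix_closed (fun h hT => hT.infix h.isInfix)
    exists_length_eq_approxSquareFree
  exact ⟨99 / 100, by norm_num, by norm_num, f,
    isInfWeakSyncString_of_forall_approxSquareFree hf⟩
end

section
/- For every ε ∈ (0,1), no binary string of length at least 4 is an ε-synchronization string: every string of length 4 over an alphabet of size 2 either contains two consecutive identical symbols or two identical consecutive substrings of length 2, and hence violates the ε-synchronization property. -/
lemma lcsLen_self {α : Type*} (S : List α) : lcsLen S S = S.length := by
  apply le_antisymm
  · apply csSup_le
    · exact ⟨S.length, S, rfl, List.Sublist.refl S, List.Sublist.refl S⟩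
    · rintro n ⟨U, hlen, hsub, -⟩
      exact hlen ▸ hsub.length_le
  · apply le_csSup
    · exact ⟨S.length, fun n ⟨U, hlen, hsub, _⟩ => hlen ▸ hsub.length_le⟩
    · exact ⟨S, rfl, List.Sublist.refl S, List.Sublist.refl S⟩

lemma editDistance_self {α : Type*} (S : List α) : editDistance S S = 0 := by
  unfold editDistance
  rw [lcsLen_self]
  omega

lemma bool_cases (a b c d : Bool) : (a = b ∨ b = c ∨ c = d) ∨ (a = c ∧ b = d) := by
  revert a b c d; decide

/-- For every `ε ∈ (0,1)`, no binary string of length at least 4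
is an ε-synchronization string; moreover every binary string of length 4
contains two consecutive identical symbols or two identical consecutive
substrings of length 2. -/
theorem no_binary_sync_string (ε : ℝ) (hε : 0 < ε) (hε1 : ε < 1) :
    (∀ S : List Bool, 4 ≤ S.length → ¬ IsSyncString ε S) ∧
    (∀ S : List Bool, S.length = 4 →
      (∃ i : ℕ, 1 ≤ i ∧ i + 2 ≤ 5 ∧
        strSlice S i (i + 1) = strSlice S (i + 1) (i + 2)) ∨
      (∃ i : ℕ, 1 ≤ i ∧ i + 4 ≤ 5 ∧
        strSlice S i (i + 2) = strSlice S (i + 2) (i + 4))) := by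
  have hpos : (0:ℝ) < 1 - ε := by linarith
  constructor
  · intro S hlen hS
    rcases S with _ | ⟨a, _ | ⟨b, _ | ⟨c, _ | ⟨d, rest⟩⟩⟩⟩ <;> simp at hlen
    rcases bool_cases a b c d with (h | h | h) | ⟨h1, h2⟩
    · have := hS 1 2 3 (by norm_num) (by norm_num) (by norm_num) (by simp)
      have e : strSlice (a::b::c::d::rest) 1 2 = strSlice (a::b::c::d::rest) 2 3 := by
        simp [strSlice, h]
      rw [e, editDistance_self] at this
      norm_num at this
      nlinarith
    · have := hS 2 3 4 (by norm_num) (by norm_num) (by norm_num) (by simp)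
      have e : strSlice (a::b::c::d::rest) 2 3 = strSlice (a::b::c::d::rest) 3 4 := by
        simp [strSlice, h]
      rw [e, editDistance_self] at this
      norm_num at this
      nlinarith
    · have := hS 3 4 5 (by norm_num) (by norm_num) (by norm_num) (by simp)
      have e : strSlice (a::b::c::d::rest) 3 4 = strSlice (a::b::c::d::rest) 4 5 := by
        simp [strSlice, h]
      rw [e, editDistance_self] at this
      norm_num at this
      nlinarith
    · have := hS 1 3 5 (by norm_num) (by norm_num) (by norm_num) (by simp)
      have e : strSlice (a::b::c::d::rest) 1 3 = strSlice (a::b::c::d::rest) 3 5 := by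
        simp [strSlice, h1, h2]
      rw [e, editDistance_self] at this
      norm_num at this
      nlinarith
  · intro S hlen
    rcases S with _ | ⟨a, _ | ⟨b, _ | ⟨c, _ | ⟨d, _ | ⟨e, rest⟩⟩⟩⟩⟩ <;> simp at hlen
    rcases bool_cases a b c d with (h | h | h) | ⟨h1, h2⟩
    · exact Or.inl ⟨1, by norm_num, by norm_num, by simp [strSlice, h]⟩
    · exact Or.inl ⟨2, by norm_num, by norm_num, by simp [strSlice, h]⟩
    · exact Or.inl ⟨3, by norm_num, by norm_num, by simp [strSlice, h]⟩
    · exact Or.inr ⟨1, by norm_num, by norm_num, by simp [strSlice, h1, h2]⟩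
end

section
/- If S is an ε-synchronization string over an alphabet Σ with ε ∈ (0,1), then any two positions i < j of S with j − i + 1 ≤ 1/ε carry distinct symbols; consequently, every ε-synchronization string of length at least 1/ε must be over an alphabet of size at least 1/ε. -/
lemma lcs_ge_one {α : Type*} {S T : List α} {c : α} (hcS : c ∈ S) (hcT : c ∈ T) :
    1 ≤ lcsLen S T := by
  have hbdd : BddAbove {n | ∃ U : List α, U.length = n ∧ U.Sublist S ∧ U.Sublist T} := by
    refine ⟨S.length, fun n hn => ?_⟩
    obtain ⟨U, hU, hUS, _⟩ := hn
    exact hU ▸ hUS.length_le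
  exact le_csSup hbdd ⟨[c], rfl, List.singleton_sublist.2 hcS, List.singleton_sublist.2 hcT⟩

lemma sync_distinct {Sig : Type*} (ε : ℝ) (hε : 0 < ε)
    (S : List Sig) (hS : IsSyncString ε S)
    (i j : ℕ) (hi : 1 ≤ i) (hij : i < j) (hj : j ≤ S.length)
    (hbound : (j : ℝ) - (i : ℝ) + 1 < 2 / ε)
    (hi1 : i - 1 < S.length) (hj1 : j - 1 < S.length) :
    S.get ⟨i - 1, hi1⟩ ≠ S.get ⟨j - 1, hj1⟩ := by
  intro heq
  have h := hS i (i + 1) (j + 1) hi (by omega) (by omega) (by omega)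
  set A := strSlice S i (i + 1) with hA
  set B := strSlice S (i + 1) (j + 1) with hB
  have hAdef : A = (S.drop (i - 1)).take 1 := by
    simp [hA, strSlice]
  have hBdef : B = (S.drop i).take (j - i) := by
    simp [hB, strSlice]
  have hlenA : A.length = 1 := by
    rw [hAdef]; simp; omega
  have hlenB : B.length = j - i := by
    rw [hBdef]; simp; omega
  set c := S.get ⟨i - 1, hi1⟩ with hc
  have hcA : c ∈ A := by
    have h0 : 0 < A.length := by omega
    have : A[0]'h0 = c := by
      simp only [hAdef, List.getElem_take, List.getElem_drop, hc, List.get_eq_getElem]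
      congr 1
    exact this ▸ List.getElem_mem _
  have hcB : c ∈ B := by
    have hlt : j - 1 - i < B.length := by omega
    have : B[j - 1 - i]'hlt = c := by
      simp only [hBdef, List.getElem_take, List.getElem_drop]
      rw [heq]
      simp only [List.get_eq_getElem]
      congr 1
      omega
    exact this ▸ List.getElem_mem _
  have hlcs : 1 ≤ lcsLen A B := lcs_ge_one hcA hcB
  have hED : editDistance A B ≤ j - i - 1 := by
    unfold editDistance
    rw [hlenA, hlenB]
    omega
  have hEDr : (editDistance A B : ℝ) ≤ (j : ℝ) - i - 1 := by
    calc (editDistance A B : ℝ) ≤ ((j - i - 1 : ℕ) : ℝ) := by exact_mod_cast hED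
    _ ≤ (j : ℝ) - i - 1 := by
        push_cast [Nat.cast_sub (by omega : 1 ≤ j - i)]
        ring_nf
        push_cast [Nat.cast_sub (by omega : i ≤ j)]
        linarith
  have hεb : ε * ((j : ℝ) - i + 1) < 2 := by
    have := (lt_div_iff₀ hε).mp hbound
    linarith
  have hcast : ((j + 1 : ℕ) : ℝ) - (i : ℝ) = (j : ℝ) - i + 1 := by push_cast; ring
  rw [hcast] at h
  nlinarith [h, hEDr]

/-- In an ε-synchronization string with `ε ∈ (0,1)`, any two
positions `i < j` with `j − i + 1 ≤ 1/ε` carry distinct symbols; consequently,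
every ε-synchronization string of length at least `1/ε` is over an alphabet of
size at least `1/ε`. -/
theorem sync_string_distinct_symbols {Sig : Type*} [Fintype Sig]
    (ε : ℝ) (hε : 0 < ε) (hε1 : ε < 1)
    (S : List Sig) (hS : IsSyncString ε S) :
    (∀ i j : ℕ, ∀ (hi : 1 ≤ i) (hij : i < j) (hj : j ≤ S.length),
      (j : ℝ) - (i : ℝ) + 1 ≤ 1 / ε →
      S.get ⟨i - 1, by omega⟩ ≠ S.get ⟨j - 1, by omega⟩) ∧
    (1 / ε ≤ (S.length : ℝ) → 1 / ε ≤ (Fintype.card Sig : ℝ)) := by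
  
  have hεinv : (1 : ℝ) < 1 / ε := by
    rw [lt_div_iff₀ hε]; linarith
  constructor
  · intro i j hi hij hj hb
    refine sync_distinct ε hε S hS i j hi hij hj ?_ _ _
    have : 1 / ε < 2 / ε := by
      rw [div_lt_div_iff₀ hε hε]; linarith
    linarith
  · intro hlen
    set m := ⌈1 / ε⌉₊ with hm
    have hmS : m ≤ S.length := Nat.ceil_le.2 (by exact_mod_cast hlen)
    have hmlt : (m : ℝ) < 2 / ε := by
      have h1 : (m : ℝ) < 1 / ε + 1 := Nat.ceil_lt_add_one (by positivity)
      have : 1 / ε + 1 < 2 / ε := by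
        rw [div_add' _ _ _ (ne_of_gt hε), div_lt_div_iff₀ hε hε]
        nlinarith
      linarith
    have hinj : Function.Injective (fun t : Fin m => S.get ⟨t, by omega⟩) := by
      intro a b hab
      by_contra hne
      wlog hlt : (a : ℕ) < (b : ℕ) generalizing a b
      · exact this (a := b) (b := a) hab.symm (Ne.symm hne) (by omega)
      have hd := sync_distinct ε hε S hS (a + 1) (b + 1) (by omega) (by omega)
        (by omega) ?_ (by omega) (by omega)
      · apply hd
        simpa using hab
      · push_cast
        have : (b : ℝ) + 1 ≤ m := by exact_mod_cast b.2
        linarith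
    have hcard : m ≤ Fintype.card Sig := by
      simpa using Fintype.card_le_of_injective _ hinj
    calc (1 / ε : ℝ) ≤ m := Nat.le_ceil _
      _ ≤ Fintype.card Sig := by exact_mod_cast hcard
end
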